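/- For every integer i ≥ 0 one has b_3^i − b_4^{i+1} > 0, where b_3^i = ((m*)²/D)·(k!/P(2k+1))·(P(k+i+1)/i!)·I(2i, 4(k+1)l+2) and b_4^{i+1} = (l·(m*)²/D)·((k+1)!/P(2k+1))·(P(k+i+1)/(i+1)!)·I(2i+2, 2(2k+1)l+2). -/

import Mathlib

/-- The critical value m* = ∏_{j=0}^{k} (2j+1)/(2jl+1). -/
noncomputable def mStar (l k : ℕ) : ℝ :=
  ∏ j ∈ Finset.range (k + 1), (2 * (j : ℝ) + 1) / (2 * (j : ℝ) * (l : ℝ) + 1)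

/-- D = 2(2k+1)l + 2. -/
noncomputable def Dd (l k : ℕ) : ℝ := 2 * (2 * (k : ℝ) + 1) * (l : ℝ) + 2

/-- P(i) = ∏_{j=0}^{i-1} (jl + 1), with P(0) = 1. -/
noncomputable def Pp (l i : ℕ) : ℝ := ∏ j ∈ Finset.range i, ((j : ℝ) * (l : ℝ) + 1)

/-- I(a,b) = (2/l^{(a+1)/2})·Γ((a+1)/2)·Γ((b+1)/(2l))/Γ((a+1)/2 + (b+1)/(2l)),
the value of ∫_0^Ω Sn^a Cs^b dθ for even a, b. -/
noncomputable def Ii (l a b : ℕ) : ℝ :=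
  2 / (l : ℝ) ^ (((a : ℝ) + 1) / 2) * Real.Gamma (((a : ℝ) + 1) / 2) *
    Real.Gamma (((b : ℝ) + 1) / (2 * (l : ℝ))) /
    Real.Gamma (((a : ℝ) + 1) / 2 + ((b : ℝ) + 1) / (2 * (l : ℝ)))

/-!
Up to normalisation `I(a, b)` is the Beta function `B(x, y)` with `x = (a+1)/2`, `y = (b+1)/(2l)`,
so `Γ(s+1) = s Γ(s)` gives the recurrence `(b+1) I(a+2, b) = (a+1) I(a, b+2l)`. For
`b = 2(2k+1)l + 2` we have `b + 2l = 4(k+1)l + 2`, hence `b₄^{i+1} = b₃ⁱ · l(k+1)(2i+1) / ((i+1)(b+1))`,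
and this ratio is below `1` because `2i+1 < 2(i+1)` and `b + 1 > 2l(k+1)`.
-/

lemma mStar_pos (l k : ℕ) : 0 < mStar l k :=
  Finset.prod_pos fun _ _ => by positivity

lemma Dd_pos (l k : ℕ) : 0 < Dd l k := by
  unfold Dd; positivity

lemma Pp_pos (l i : ℕ) : 0 < Pp l i :=
  Finset.prod_pos fun _ _ => by positivity

lemma Ii_pos {l : ℕ} (hl : 0 < l) (a b : ℕ) : 0 < Ii l a b := by
  unfold Ii
  have hL : (0 : ℝ) < l := by exact_mod_cast hl
  have hx : (0 : ℝ) < ((a : ℝ) + 1) / 2 := by positivity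
  have hy : (0 : ℝ) < ((b : ℝ) + 1) / (2 * l) := by positivity
  have := Real.rpow_pos_of_pos hL (((a : ℝ) + 1) / 2)
  have := Real.Gamma_pos_of_pos hx
  have := Real.Gamma_pos_of_pos hy
  have := Real.Gamma_pos_of_pos (add_pos hx hy)
  positivity

lemma add_one_mul_Ii_add_two {l : ℕ} (hl : 0 < l) (a b : ℕ) :
    ((b : ℝ) + 1) * Ii l (a + 2) b = ((a : ℝ) + 1) * Ii l a (b + 2 * l) := by
  have hL : (l : ℝ) ≠ 0 := by positivity
  set x : ℝ := ((a : ℝ) + 1) / 2 with hx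
  set y : ℝ := ((b : ℝ) + 1) / (2 * l) with hy
  have hx0 : x ≠ 0 := by positivity
  have hy0 : y ≠ 0 := by positivity
  have ha : (((a + 2 : ℕ) : ℝ) + 1) / 2 = x + 1 := by push_cast; ring
  have hb : (((b + 2 * l : ℕ) : ℝ) + 1) / (2 * l) = y + 1 := by rw [hy]; push_cast; field_simp; ring
  unfold Ii
  rw [ha, hb, ← hx, ← hy, Real.rpow_add_one hL, Real.Gamma_add_one hx0, Real.Gamma_add_one hy0,
    add_right_comm x 1 y, ← add_assoc]
  have hb1 : (b : ℝ) + 1 = 2 * l * y := by rw [hy]; field_simp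
  have ha1 : (a : ℝ) + 1 = 2 * x := by rw [hx]; ring
  rw [hb1, ha1]
  field_simp

theorem b3_sub_b4_pos_general (l k : ℕ) (hl : 2 ≤ l) (i : ℕ) :
    0 < mStar l k ^ 2 / Dd l k * ((Nat.factorial k : ℝ) / Pp l (2 * k + 1)) *
          (Pp l (k + i + 1) / (Nat.factorial i : ℝ)) * Ii l (2 * i) (4 * (k + 1) * l + 2) -
        (l : ℝ) * mStar l k ^ 2 / Dd l k * ((Nat.factorial (k + 1) : ℝ) / Pp l (2 * k + 1)) *
          (Pp l (k + i + 1) / (Nat.factorial (i + 1) : ℝ)) *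
          Ii l (2 * i + 2) (2 * (2 * k + 1) * l + 2) := by
  have hl0 : 0 < l := by omega
  set b := 2 * (2 * k + 1) * l + 2 with hb
  have hrec := add_one_mul_Ii_add_two hl0 (2 * i) b
  rw [show b + 2 * l = 4 * (k + 1) * l + 2 by rw [hb]; ring] at hrec
  set J := Ii l (2 * i) (4 * (k + 1) * l + 2)
  set C := mStar l k ^ 2 / Dd l k * ((Nat.factorial k : ℝ) / Pp l (2 * k + 1)) *
    (Pp l (k + i + 1) / (Nat.factorial i : ℝ)) with hCdef
  have hC : 0 < C := by
    have := mStar_pos l k; have := Dd_pos l k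
    have := Pp_pos l (2 * k + 1); have := Pp_pos l (k + i + 1)
    positivity
  have hJ : 0 < J := Ii_pos hl0 _ _
  have hratio : (l : ℝ) * (k + 1) * (2 * i + 1) < (i + 1) * (b + 1) := by
    rw [hb]; push_cast
    nlinarith [show (0 : ℝ) ≤ l * k * i by positivity, show (0 : ℝ) ≤ l * i by positivity]
  have hsplit : C * J - (l : ℝ) * mStar l k ^ 2 / Dd l k *
      ((Nat.factorial (k + 1) : ℝ) / Pp l (2 * k + 1)) *
      (Pp l (k + i + 1) / (Nat.factorial (i + 1) : ℝ)) * Ii l (2 * i + 2) b =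
      C * J * (1 - (l : ℝ) * (k + 1) * (2 * i + 1) / ((i + 1) * (b + 1))) := by
    have hI : Ii l (2 * i + 2) b = (2 * i + 1) / (b + 1) * J := by
      rw [div_mul_eq_mul_div, eq_div_iff (by positivity)]
      push_cast at hrec; linarith
    rw [hI, hCdef, Nat.factorial_succ k, Nat.factorial_succ i]
    have := Pp_pos l (2 * k + 1); have := Dd_pos l k
    push_cast
    field_simp
  rw [hsplit]
  exact mul_pos (mul_pos hC hJ) (sub_pos.mpr ((div_lt_one (by positivity)).mpr hratio))

/-- Proposition 3.2 (i): b₃ⁱ − b₄^{i+1} > 0. -/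
theorem b3_sub_b4_pos (l k : ℕ) (hl : 2 ≤ l) (hk : 1 ≤ k) (i : ℕ) :
    0 < mStar l k ^ 2 / Dd l k * ((Nat.factorial k : ℝ) / Pp l (2 * k + 1)) *
          (Pp l (k + i + 1) / (Nat.factorial i : ℝ)) * Ii l (2 * i) (4 * (k + 1) * l + 2) -
        (l : ℝ) * mStar l k ^ 2 / Dd l k * ((Nat.factorial (k + 1) : ℝ) / Pp l (2 * k + 1)) *
          (Pp l (k + i + 1) / (Nat.factorial (i + 1) : ℝ)) *
          Ii l (2 * i + 2) (2 * (2 * k + 1) * l + 2) :=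
  b3_sub_b4_pos_general l k hl i
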